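/- arXiv:2406.13684 — 3 statements merged into one kernel-verified Lean document; each statement's English description precedes it below -/
import Mathlib

section
/- Let ξ be a Reeb field and let φ = max_{1≤j≤N} (log|f_j|+λ_j)/⟨ξ,α_j⟩ ∈ H(ξ). Let (ξ_i) be a sequence of Reeb fields converging to ξ in N_ℝ, and define φ^i := max_{1≤j≤N} (log|f_j|+λ_j)/⟨ξ_i,α_j⟩ ∈ H(ξ_i), using the same data f_j, λ_j, α_j. Then φ^i converges to φ uniformly on every compact subset of X^an∖{o}. -/
open Filter Topology
open scoped Classical

noncomputable section

/-- A (real) semivaluation on `R` trivial on `k`, encoded as a function `R → ℝ ∪ {+∞} ⊆ EReal`. -/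
def IsSemival (k : Type*) {R : Type*} [Field k] [CommRing R] [Algebra k R]
    (v : R → EReal) : Prop :=
  (∀ f, v f ≠ ⊥) ∧ (∀ f g, v (f * g) = v f + v g) ∧
    (∀ f g, min (v f) (v g) ≤ v (f + g)) ∧ v 0 = ⊤ ∧
    ∀ c : k, c ≠ 0 → v (algebraMap k R c) = 0

/-- The pairing `⟨ξ, α⟩` between `ξ ∈ N_ℝ` and a weight `α ∈ M`. -/
def pairing {r : ℕ} (ξ : Fin r → ℝ) (α : Fin r → ℤ) : ℝ := ∑ i, ξ i * (α i : ℝ)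

variable {k : Type*} [Field k] [IsAlgClosed k] [CharZero k]
variable {R : Type*} [CommRing R] [IsDomain R] [IsIntegrallyClosed R] [Algebra k R]
  [Algebra.FiniteType k R]
variable {r : ℕ} (𝒜 : (Fin r → ℤ) → Submodule k R) [GradedAlgebra 𝒜]

/-- `ξ` is a Reeb field: `⟨ξ,α⟩ > 0` for all `α ∈ Λ ∖ {0}`. -/
def IsReeb (ξ : Fin r → ℝ) : Prop :=
  ∀ α : Fin r → ℤ, α ≠ 0 → 𝒜 α ≠ ⊥ → 0 < pairing ξ α

/-- The maximal ideal `𝔪` of the cone point. -/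
def mIdeal : Ideal R := Ideal.span {f : R | ∃ α, α ≠ 0 ∧ f ∈ 𝒜 α}

/-- The semivaluation of the cone point `o`: `+∞` on `𝔪`, `0` elsewhere. -/
def oFun : R → EReal := fun f => if f ∈ mIdeal 𝒜 then (⊤ : EReal) else 0

/-- The punctured Berkovich cone `X^an ∖ {o}`. -/
def XanP : Set (R → EReal) := {v | IsSemival k v ∧ v ≠ oFun 𝒜}

/-- The term `(log|f| + λ)/⟨ξ,α⟩` evaluated at `v`; recall `log|f|(v) = -v(f)`. -/
def fsTerm (ξ : Fin r → ℝ) (α : Fin r → ℤ) (f : R) (lam : ℝ) (v : R → EReal) : EReal :=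
  (((pairing ξ α)⁻¹ : ℝ) : EReal) * (-(v f) + (lam : EReal))

/-- Fubini–Study functions with polarization `ξ`. -/
def IsFS (ξ : Fin r → ℝ) (φ : XanP 𝒜 → ℝ) : Prop :=
  ∃ (N : ℕ) (f : Fin N → R) (α : Fin N → Fin r → ℤ) (lam : Fin N → ℝ),
    (∀ j, α j ≠ 0 ∧ f j ∈ 𝒜 (α j) ∧ f j ≠ 0) ∧
    (Ideal.span (Set.range f)).radical = mIdeal 𝒜 ∧
    ∀ v : XanP 𝒜, (φ v : EReal) = ⨆ j, fsTerm ξ (α j) (f j) (lam j) v.1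

/-- Continuous `ξ`-psh functions: the closure of `H(ξ)` in `C⁰(X^an∖{o})` with the
topology of uniform convergence on compact subsets (compact-open topology). -/
def cpsh (ξ : Fin r → ℝ) : Set C(↥(XanP 𝒜), ℝ) := closure {φ | IsFS 𝒜 ξ ⇑φ}

/-- `ξ`-psh functions: pointwise limits of decreasing nets of continuous `ξ`-psh
functions, not identically `-∞`, with values in `ℝ ∪ {-∞}`. -/
def IsPsh (ξ : Fin r → ℝ) (φ : XanP 𝒜 → EReal) : Prop :=
  (∀ v, φ v ≠ ⊤) ∧ (∃ v, φ v ≠ ⊥) ∧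
  ∃ (ι : Type) (le : ι → ι → Prop),
    Nonempty ι ∧ (∀ i j : ι, ∃ l, le i l ∧ le j l) ∧
    ∃ φi : ι → C(↥(XanP 𝒜), ℝ),
      (∀ i, φi i ∈ cpsh 𝒜 ξ) ∧
      (∀ i j, le i j → ∀ v, φi j v ≤ φi i v) ∧
      ∀ v, (⨅ i, ((φi i v : ℝ) : EReal)) = φ v

/-- The NA link `X₀ = {v : v(𝔪) = 0}`, as a subset of the punctured cone. -/
def linkSet : Set (↥(XanP 𝒜)) :=
  {v | (∀ f ∈ mIdeal 𝒜, f ≠ 0 → 0 ≤ v.1 f) ∧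
    sInf {x : EReal | ∃ f ∈ mIdeal 𝒜, f ≠ 0 ∧ x = v.1 f} = 0}

/-- `T(v;ξ) = sup { v(f)/⟨ξ,α⟩ : α ∈ Λ∖{0}, f ∈ R_α ∖ {0} }`. -/
def Tfun (v : R → EReal) (ξ : Fin r → ℝ) : EReal :=
  sSup {x : EReal | ∃ (α : Fin r → ℤ) (f : R), α ≠ 0 ∧ f ∈ 𝒜 α ∧ f ≠ 0 ∧
    x = (((pairing ξ α)⁻¹ : ℝ) : EReal) * v f}

end

/-!
With `ρᵢⱼ = ⟨ξ,αⱼ⟩/⟨ξᵢ,αⱼ⟩`, each term of `φⁱ` is the corresponding term of `φ` multiplied by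
`ρᵢⱼ → 1`. Rescaling the terms of a finite maximum by factors in `[1-ε, 1+ε]` moves a finite
value `a` by at most `ε|a|` (terms equal to `-∞` stay `-∞`), so `|φⁱ - φ| ≤ (∑ⱼ |ρᵢⱼ - 1|) |φ|`.
As a finite maximum of continuous functions, `φ` is bounded on compact sets.
-/

namespace EReal

theorem continuous_coe_mul (c : ℝ) : Continuous fun x : EReal => (c : EReal) * x := by
  rcases eq_or_ne c 0 with rfl | hc
  · simpa using continuous_const
  have hc' : (c : EReal) ≠ 0 := coe_ne_zero.2 hc
  refine continuous_iff_continuousAt.2 fun x => ?_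
  exact (continuousAt_mul (Or.inl hc') (Or.inl hc') (Or.inl (coe_ne_bot c))
    (Or.inl (coe_ne_top c))).comp (continuousAt_const.prodMk continuousAt_id)

theorem continuous_add_coe (c : ℝ) : Continuous fun x : EReal => x + c :=
  continuous_iff_continuousAt.2 fun _ =>
    (continuousAt_add (Or.inr (coe_ne_bot c)) (Or.inr (coe_ne_top c))).comp
      (continuousAt_id.prodMk continuousAt_const)

end EReal

theorem continuous_of_coe_eq_iSup {X ι : Type*} [TopologicalSpace X] [Fintype ι]
    {g : ι → X → EReal} (hg : ∀ j, Continuous (g j)) {φ : X → ℝ}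
    (hφ : ∀ x, (φ x : EReal) = ⨆ j, g j x) : Continuous φ := by
  rw [← EReal.continuous_coe_iff, funext hφ]
  simpa only [← Finset.sup_univ_eq_iSup, Finset.sup_apply] using
    Continuous.finset_sup_apply (s := Finset.univ) fun j _ => hg j

theorem mul_le_add_mul_abs {ρ ε s a : ℝ} (hρ : 0 ≤ ρ) (hρε : |ρ - 1| ≤ ε) (hsa : s ≤ a) :
    ρ * s ≤ a + ε * |a| := by
  obtain ⟨h₁, h₂⟩ := abs_le.1 hρε
  rcases le_total 0 s with hs | hs
  · nlinarith [le_abs_self a, neg_abs_le a]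
  · nlinarith [le_abs_self a, neg_abs_le a]

theorem abs_sub_le_of_coe_eq_iSup_mul {ι : Type*} [Finite ι] {t : ι → EReal} {ρ : ι → ℝ}
    {ε : ℝ} (hε : ε < 1) (hρ : ∀ j, |ρ j - 1| ≤ ε) {a a' : ℝ}
    (ha : (a : EReal) = ⨆ j, t j) (ha' : (a' : EReal) = ⨆ j, (ρ j : EReal) * t j) :
    |a' - a| ≤ ε * |a| := by
  have hρpos : ∀ j, 0 < ρ j := fun j => by linarith [(abs_le.1 (hρ j)).1]
  have : Nonempty ι := by
    by_contra h
    rw [not_nonempty_iff] at h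
    exact EReal.coe_ne_bot a (ha.trans (iSup_of_empty _))
  obtain ⟨j₀, hj₀⟩ := Finite.exists_max t
  have ht₀ : t j₀ = a := by rw [ha]; exact le_antisymm (le_iSup t j₀) (iSup_le hj₀)
  have hlower : ρ j₀ * a ≤ a' := by
    rw [← EReal.coe_le_coe_iff, EReal.coe_mul, ha', ← ht₀]
    exact le_iSup (fun j => (ρ j : EReal) * t j) j₀
  have hupper : a' ≤ a + ε * |a| := by
    rw [← EReal.coe_le_coe_iff, ha']
    refine iSup_le fun j => ?_
    have htj : t j ≤ a := ha ▸ le_iSup t j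
    induction h : t j with
    | bot => rw [EReal.coe_mul_bot_of_pos (hρpos j)]; exact bot_le
    | top => exact absurd (h ▸ htj) (by simp)
    | coe s =>
      rw [← EReal.coe_mul, EReal.coe_le_coe_iff]
      exact mul_le_add_mul_abs (hρpos j).le (hρ j) (EReal.coe_le_coe_iff.1 (h ▸ htj))
  have hρa : |ρ j₀ * a - a| ≤ ε * |a| := by
    rw [← sub_one_mul, abs_mul]
    exact mul_le_mul_of_nonneg_right (hρ j₀) (abs_nonneg a)
  rw [abs_le] at hρa ⊢
  constructor <;> linarith

theorem continuous_pairing {r : ℕ} (α : Fin r → ℤ) :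
    Continuous fun ξ : Fin r → ℝ => pairing ξ α := by
  unfold pairing
  fun_prop

theorem IsReeb.pairing_pos {k R : Type*} [Field k] [CommRing R] [Algebra k R] {r : ℕ}
    {𝒜 : (Fin r → ℤ) → Submodule k R} {ξ : Fin r → ℝ} (hξ : IsReeb 𝒜 ξ) {α : Fin r → ℤ} {f : R}
    (hα : α ≠ 0) (hf : f ∈ 𝒜 α) (hf₀ : f ≠ 0) : 0 < pairing ξ α :=
  hξ α hα fun h => hf₀ (by simpa [h] using hf)

theorem continuous_fsTerm {R : Type*} {r : ℕ} (ξ : Fin r → ℝ) (α : Fin r → ℤ) (f : R) (lam : ℝ) :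
    Continuous (fsTerm ξ α f lam) :=
  (EReal.continuous_coe_mul _).comp
    ((EReal.continuous_add_coe lam).comp (continuous_neg.comp (continuous_apply f)))

theorem fsTerm_eq_mul {R : Type*} {r : ℕ} {ξ : Fin r → ℝ} (ξ' : Fin r → ℝ) {α : Fin r → ℤ}
    (f : R) (lam : ℝ) (v : R → EReal) (hξ : pairing ξ α ≠ 0) :
    fsTerm ξ' α f lam v = ((pairing ξ α / pairing ξ' α : ℝ) : EReal) * fsTerm ξ α f lam v := by
  unfold fsTerm
  rw [← mul_assoc, ← EReal.coe_mul, div_eq_mul_inv, mul_right_comm, mul_inv_cancel₀ hξ, one_mul]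

section Statements

variable {k : Type*} [Field k] [IsAlgClosed k] [CharZero k]
variable {R : Type*} [CommRing R] [IsDomain R] [IsIntegrallyClosed R] [Algebra k R]
  [Algebra.FiniteType k R]
variable {r : ℕ} (𝒜 : (Fin r → ℤ) → Submodule k R) [GradedAlgebra 𝒜]

theorem statement1 (ξ : Fin r → ℝ)
    (hξ : IsReeb 𝒜 ξ)
    -- the data defining `φ ∈ H(ξ)`
    (N : ℕ) (f : Fin N → R) (α : Fin N → Fin r → ℤ) (lam : Fin N → ℝ)
    (hdata : ∀ j, α j ≠ 0 ∧ f j ∈ 𝒜 (α j) ∧ f j ≠ 0)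
    (φ : ↥(XanP 𝒜) → ℝ)
    (hφ : ∀ v : ↥(XanP 𝒜), (φ v : EReal) = ⨆ j, fsTerm ξ (α j) (f j) (lam j) v.1)
    -- a sequence of Reeb fields `ξᵢ → ξ`
    (ξi : ℕ → Fin r → ℝ)
    (hconv : Filter.Tendsto ξi Filter.atTop (nhds ξ))
    -- `φⁱ ∈ H(ξᵢ)`, defined by the same data with `ξ` replaced by `ξᵢ`
    (φi : ℕ → ↥(XanP 𝒜) → ℝ)
    (hφi : ∀ i (v : ↥(XanP 𝒜)),
      (φi i v : EReal) = ⨆ j, fsTerm (ξi i) (α j) (f j) (lam j) v.1) :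
    ∀ K : Set (↥(XanP 𝒜)), IsCompact K →
      TendstoUniformlyOn (fun i => φi i) φ Filter.atTop K := by
  intro K hK
  obtain ⟨C, hC⟩ := hK.exists_bound_of_continuousOn (continuous_of_coe_eq_iSup
    (fun j => (continuous_fsTerm _ _ _ _).comp continuous_subtype_val) hφ).continuousOn
  have hpos j : 0 < pairing ξ (α j) := hξ.pairing_pos (hdata j).1 (hdata j).2.1 (hdata j).2.2
  set ρ : ℕ → Fin N → ℝ := fun i j => pairing ξ (α j) / pairing (ξi i) (α j)
  set δ : ℕ → ℝ := fun i => ∑ j, |ρ i j - 1|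
  have hδ : Tendsto δ atTop (𝓝 0) := by
    have hρ j : Tendsto (fun i => ρ i j) atTop (𝓝 1) := by
      have h := (tendsto_const_nhds (x := pairing ξ (α j))).div
        (((continuous_pairing (α j)).tendsto ξ).comp hconv) (hpos j).ne'
      rwa [div_self (hpos j).ne'] at h
    simpa using tendsto_finsetSum Finset.univ fun j _ => ((hρ j).sub_const 1).abs
  have hclose : ∀ i, δ i < 1 → ∀ v ∈ K, |φi i v - φ v| ≤ δ i * C := by
    intro i hi v hv
    have hρδ j : |ρ i j - 1| ≤ δ i :=
      Finset.single_le_sum (f := fun j => |ρ i j - 1|) (fun _ _ => abs_nonneg _) (Finset.mem_univ j)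
    have hφi' : (φi i v : EReal) = ⨆ j, (ρ i j : EReal) * fsTerm ξ (α j) (f j) (lam j) v.1 := by
      simpa only [fsTerm_eq_mul (ξi i) _ _ _ (hpos _).ne'] using hφi i v
    calc |φi i v - φ v| ≤ δ i * |φ v| := abs_sub_le_of_coe_eq_iSup_mul hi hρδ (hφ v) hφi'
      _ ≤ δ i * C := mul_le_mul_of_nonneg_left (hC v hv) (Finset.sum_nonneg fun _ _ => abs_nonneg _)
  rw [Metric.tendstoUniformlyOn_iff]
  intro ε hε
  have hδC : Tendsto (fun i => δ i * C) atTop (𝓝 0) := by simpa using hδ.mul_const C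
  filter_upwards [hδ.eventually (gt_mem_nhds one_pos), hδC.eventually (gt_mem_nhds hε)]
    with i hδ₁ hδε v hv
  rw [dist_comm, Real.dist_eq]
  exact (hclose i hδ₁ v hv).trans_lt hδε

end Statements
end

section
/- Let v ∈ X_0. If T(v;ξ₀) < +∞ for some Reeb field ξ₀, then T(v;ξ) < +∞ for every Reeb field ξ; moreover, for such a linearly bounded v, the map ξ ↦ T(v;ξ) is continuous on the Reeb cone 𝔱⁺ and is homogeneous of degree −1, i.e. T(v;tξ) = t⁻¹T(v;ξ) for all t > 0 and all Reeb fields ξ. -/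
open Filter Topology
open scoped Classical

/-!
The weights of `R` lie in the additive monoid generated by the finitely many weights `E` of the
homogeneous components of a finite set of generators. Hence for Reeb fields `ξ, ξ'` there is a
constant `C ≥ 0` with `⟨ξ,α⟩ ≤ C ⟨ξ',α⟩` for every weight `α`, and `C` can be taken arbitrarily
close to `1` when `ξ'` is close to `ξ`. Since `v ≥ 0` on homogeneous elements of nonzero weight,
this gives `T(v;ξ') ≤ C T(v;ξ)`, from which finiteness and continuity follow. Homogeneity is
immediate from `⟨tξ,α⟩ = t⟨ξ,α⟩`.
-/

section Pairing

variable {r : ℕ}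

lemma pairing_zero_right (ξ : Fin r → ℝ) : pairing ξ 0 = 0 := by
  simp [pairing]

lemma pairing_add_right (ξ : Fin r → ℝ) (α β : Fin r → ℤ) :
    pairing ξ (α + β) = pairing ξ α + pairing ξ β := by
  simp only [pairing, Pi.add_apply, Int.cast_add, mul_add, Finset.sum_add_distrib]

lemma pairing_smul_left (t : ℝ) (ξ : Fin r → ℝ) (α : Fin r → ℤ) :
    pairing (t • ξ) α = t * pairing ξ α := by
  simp only [pairing, Pi.smul_apply, smul_eq_mul, Finset.mul_sum, mul_assoc]

lemma continuous_pairing_left (α : Fin r → ℤ) : Continuous fun ξ : Fin r → ℝ => pairing ξ α := by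
  unfold pairing
  fun_prop

lemma pairing_le_mul_of_mem_closure {s : Set (Fin r → ℤ)} {ξ ξ' : Fin r → ℝ} {C : ℝ}
    (h : ∀ d ∈ s, pairing ξ d ≤ C * pairing ξ' d) {α : Fin r → ℤ}
    (hα : α ∈ AddSubmonoid.closure s) : pairing ξ α ≤ C * pairing ξ' α := by
  induction hα using AddSubmonoid.closure_induction with
  | mem d hd => exact h d hd
  | zero => simp [pairing_zero_right]
  | add α β _ _ hα hβ =>
      rw [pairing_add_right, pairing_add_right, mul_add]
      exact add_le_add hα hβ

end Pairing

section Weights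

open DirectSum

variable {ι k R : Type*} [DecidableEq ι] [AddMonoid ι] [CommSemiring k] [Semiring R] [Algebra k R]
  (𝒜 : ι → Submodule k R) [GradedAlgebra 𝒜]

lemma exists_add_eq_of_decompose_mul_ne_zero {x y : R} {i : ι}
    (h : decompose 𝒜 (x * y) i ≠ 0) :
    ∃ a b, decompose 𝒜 x a ≠ 0 ∧ decompose 𝒜 y b ≠ 0 ∧ a + b = i := by
  have hco : (decompose 𝒜 (x * y) i : R) ≠ 0 := ZeroMemClass.coe_eq_zero.not.mpr h
  rw [decompose_mul, coe_mul_apply] at hco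
  obtain ⟨⟨a, b⟩, hab, -⟩ := Finset.exists_ne_zero_of_sum_ne_zero hco
  simp only [Finset.mem_filter, Finset.mem_product, DFinsupp.mem_support_iff] at hab
  exact ⟨a, b, hab.1.1, hab.1.2, hab.2⟩

lemma decompose_ne_zero_mem_closure {s : Set R} (hs : Algebra.adjoin k s = ⊤) (x : R) :
    ∀ i, decompose 𝒜 x i ≠ 0 →
      i ∈ AddSubmonoid.closure {j | ∃ y ∈ s, decompose 𝒜 y j ≠ 0} := by
  have hx : x ∈ Algebra.adjoin k s := hs ▸ Algebra.mem_top
  induction hx using Algebra.adjoin_induction with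
  | mem y hy => exact fun i hi => AddSubmonoid.subset_closure ⟨y, hy, hi⟩
  | algebraMap c =>
      intro i hi
      rcases eq_or_ne i 0 with rfl | hi0
      · exact zero_mem _
      · exact absurd (ZeroMemClass.coe_eq_zero.mp
          (decompose_of_mem_ne 𝒜 (SetLike.algebraMap_mem_graded 𝒜 c) hi0.symm)) hi
  | add y z _ _ hy hz =>
      intro i hi
      rw [decompose_add, DirectSum.add_apply] at hi
      by_cases hyi : decompose 𝒜 y i = 0
      · exact hz i (by simpa [hyi] using hi)
      · exact hy i hyi
  | mul y z _ _ hy hz =>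
      intro i hi
      obtain ⟨a, b, ha, hb, rfl⟩ := exists_add_eq_of_decompose_mul_ne_zero 𝒜 hi
      exact add_mem (hy a ha) (hz b hb)

theorem exists_finset_weights [Algebra.FiniteType k R] :
    ∃ E : Finset ι, (∀ d ∈ E, 𝒜 d ≠ ⊥) ∧
      ∀ i, 𝒜 i ≠ ⊥ → i ∈ AddSubmonoid.closure (E : Set ι) := by
  obtain ⟨s, hs⟩ := Algebra.FiniteType.out (R := k) (A := R)
  refine ⟨s.biUnion fun y => (decompose 𝒜 y).support, ?_, ?_⟩
  · intro d hd
    obtain ⟨y, -, hy⟩ := Finset.mem_biUnion.mp hd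
    exact (Submodule.ne_bot_iff _).mpr ⟨_, (decompose 𝒜 y d).2,
      ZeroMemClass.coe_eq_zero.not.mpr (DFinsupp.mem_support_iff.mp hy)⟩
  · intro i hi
    obtain ⟨f, hf, hf0⟩ := (Submodule.ne_bot_iff _).mp hi
    have hfi : decompose 𝒜 f i ≠ 0 :=
      ZeroMemClass.coe_eq_zero.not.mp (by rwa [decompose_of_mem_same 𝒜 hf])
    refine AddSubmonoid.closure_mono ?_ (decompose_ne_zero_mem_closure 𝒜 hs f i hfi)
    rintro j ⟨y, hy, hj⟩
    exact Finset.mem_biUnion.mpr ⟨y, hy, DFinsupp.mem_support_iff.mpr hj⟩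

end Weights

namespace EReal

lemma exists_one_lt_coe_mul_lt {a b : EReal} (h : a < b) : ∃ c : ℝ, 1 < c ∧ (c : EReal) * a < b := by
  have hcont : ContinuousAt (fun c : ℝ => (c : EReal) * a) 1 :=
    (continuousAt_mul (p := (((1 : ℝ) : EReal), a)) (Or.inl one_ne_zero) (Or.inl one_ne_zero)
      (Or.inl (coe_ne_bot 1)) (Or.inl (coe_ne_top 1))).comp (f := fun c : ℝ => ((c : EReal), a))
      (continuous_coe_real_ereal.prodMk continuous_const).continuousAt
  have hnear : ∀ᶠ c : ℝ in 𝓝 1, (c : EReal) * a < b :=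
    hcont.eventually (gt_mem_nhds (by simpa using h))
  obtain ⟨c, hcb, hc⟩ := ((hnear.filter_mono nhdsWithin_le_nhds).and
    (self_mem_nhdsWithin (s := Set.Ioi (1 : ℝ)))).exists
  exact ⟨c, hc, hcb⟩

lemma tendsto_of_forall_eventually_le_mul {X : Type*} {f : X → EReal} {l : Filter X} {a : EReal}
    (h : ∀ c : ℝ, 1 < c → ∀ᶠ y in l, f y ≤ c * a ∧ a ≤ c * f y) : Tendsto f l (𝓝 a) := by
  refine tendsto_order.2 ⟨fun b hb => ?_, fun b hb => ?_⟩
  · obtain ⟨c, hc, hcb⟩ := exists_one_lt_coe_mul_lt hb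
    filter_upwards [h c hc] with y hy
    exact lt_of_mul_lt_mul_left (hcb.trans_le hy.2) (EReal.coe_nonneg.2 (zero_le_one.trans hc.le))
  · obtain ⟨c, hc, hca⟩ := exists_one_lt_coe_mul_lt hb
    filter_upwards [h c hc] with y hy
    exact hy.1.trans_lt hca

end EReal

section Reeb

variable {k R : Type*} [Field k] [CommRing R] [Algebra k R] {r : ℕ}
  (𝒜 : (Fin r → ℤ) → Submodule k R) {ξ ξ' : Fin r → ℝ}

lemma IsReeb.pairing_nonneg (hξ : IsReeb 𝒜 ξ) {d : Fin r → ℤ} (hd : 𝒜 d ≠ ⊥) :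
    0 ≤ pairing ξ d := by
  rcases eq_or_ne d 0 with rfl | hd0
  · exact (pairing_zero_right ξ).ge
  · exact (hξ d hd0 hd).le

lemma IsReeb.exists_pairing_le_mul {E : Finset (Fin r → ℤ)} (hE : ∀ d ∈ E, 𝒜 d ≠ ⊥)
    (hξ : IsReeb 𝒜 ξ) (hξ' : IsReeb 𝒜 ξ') :
    ∃ C, 0 ≤ C ∧ ∀ d ∈ E, pairing ξ d ≤ C * pairing ξ' d := by
  have hratio : ∀ d ∈ E, 0 ≤ pairing ξ d / pairing ξ' d := fun d hd =>
    div_nonneg (hξ.pairing_nonneg 𝒜 (hE d hd)) (hξ'.pairing_nonneg 𝒜 (hE d hd))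
  refine ⟨∑ d ∈ E, pairing ξ d / pairing ξ' d, Finset.sum_nonneg hratio, fun d hd => ?_⟩
  rcases eq_or_ne d 0 with rfl | hd0
  · simp [pairing_zero_right]
  · rw [← div_le_iff₀ (hξ' d hd0 (hE d hd))]
    exact Finset.single_le_sum hratio hd

lemma IsReeb.eventually_pairing_le_mul {E : Finset (Fin r → ℤ)} (hE : ∀ d ∈ E, 𝒜 d ≠ ⊥)
    (hξ : IsReeb 𝒜 ξ) {c : ℝ} (hc : 1 < c) :
    ∀ᶠ ξ' in 𝓝 ξ, ∀ d ∈ E, pairing ξ d ≤ c * pairing ξ' d ∧ pairing ξ' d ≤ c * pairing ξ d := by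
  rw [Filter.eventually_all_finset]
  intro d hd
  rcases eq_or_ne d 0 with rfl | hd0
  · simp [pairing_zero_right]
  have hp := hξ d hd0 (hE d hd)
  have hlim := (continuous_pairing_left d).tendsto ξ
  filter_upwards [hlim.eventually (lt_mem_nhds (div_lt_self hp hc)),
    hlim.eventually (gt_mem_nhds (lt_mul_left hp hc))] with ξ' hlow hup
  exact ⟨((div_lt_iff₀' (zero_lt_one.trans hc)).1 hlow).le, hup.le⟩

end Reeb

section LinearBound

variable {k R : Type*} [Field k] [CommRing R] [Algebra k R] {r : ℕ}
  (𝒜 : (Fin r → ℤ) → Submodule k R) {v : R → EReal} {ξ ξ' : Fin r → ℝ}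

lemma le_Tfun {α : Fin r → ℤ} {f : R} (hα : α ≠ 0) (hf : f ∈ 𝒜 α) (hf0 : f ≠ 0) :
    (((pairing ξ α)⁻¹ : ℝ) : EReal) * v f ≤ Tfun 𝒜 v ξ :=
  le_sSup ⟨α, f, hα, hf, hf0, rfl⟩

lemma Tfun_le_iff {b : EReal} : Tfun 𝒜 v ξ ≤ b ↔
    ∀ α f, α ≠ 0 → f ∈ 𝒜 α → f ≠ 0 → (((pairing ξ α)⁻¹ : ℝ) : EReal) * v f ≤ b := by
  refine ⟨fun h α f hα hf hf0 => (le_Tfun 𝒜 hα hf hf0).trans h, fun h => sSup_le ?_⟩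
  rintro _ ⟨α, f, hα, hf, hf0, rfl⟩
  exact h α f hα hf hf0

lemma Tfun_smul (v : R → EReal) {t : ℝ} (ht : 0 < t) (ξ : Fin r → ℝ) :
    Tfun 𝒜 v (t • ξ) = ((t⁻¹ : ℝ) : EReal) * Tfun 𝒜 v ξ := by
  have hscale : ∀ α, ((pairing (t • ξ) α)⁻¹ : ℝ) = t⁻¹ * (pairing ξ α)⁻¹ := fun α => by
    rw [pairing_smul_left, mul_inv]
  apply le_antisymm
  · refine (Tfun_le_iff 𝒜).2 fun α f hα hf hf0 => ?_
    rw [hscale, EReal.coe_mul, mul_assoc]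
    exact mul_le_mul_of_nonneg_left (le_Tfun 𝒜 hα hf hf0)
      (EReal.coe_nonneg.2 (inv_nonneg.2 ht.le))
  · have h : Tfun 𝒜 v ξ ≤ t * Tfun 𝒜 v (t • ξ) := by
      refine (Tfun_le_iff 𝒜).2 fun α f hα hf hf0 => ?_
      rw [← mul_inv_cancel_left₀ ht.ne' (pairing ξ α)⁻¹, ← hscale, EReal.coe_mul, mul_assoc]
      exact mul_le_mul_of_nonneg_left (le_Tfun 𝒜 hα hf hf0) (EReal.coe_nonneg.2 ht.le)
    calc ((t⁻¹ : ℝ) : EReal) * Tfun 𝒜 v ξ ≤ ((t⁻¹ : ℝ) : EReal) * (t * Tfun 𝒜 v (t • ξ)) :=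
          mul_le_mul_of_nonneg_left h (EReal.coe_nonneg.2 (inv_nonneg.2 ht.le))
      _ = Tfun 𝒜 v (t • ξ) := by
          rw [← mul_assoc, ← EReal.coe_mul, inv_mul_cancel₀ ht.ne', EReal.coe_one, one_mul]

variable (hv : ∀ α f, α ≠ 0 → f ∈ 𝒜 α → f ≠ 0 → 0 ≤ v f)
include hv

lemma Tfun_le_mul_Tfun (hξ : IsReeb 𝒜 ξ) (hξ' : IsReeb 𝒜 ξ') {C : ℝ} (hC : 0 ≤ C)
    (h : ∀ α, α ≠ 0 → 𝒜 α ≠ ⊥ → pairing ξ α ≤ C * pairing ξ' α) :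
    Tfun 𝒜 v ξ' ≤ C * Tfun 𝒜 v ξ := by
  refine (Tfun_le_iff 𝒜).2 fun α f hα hf hf0 => ?_
  have hne : 𝒜 α ≠ ⊥ := (Submodule.ne_bot_iff _).2 ⟨f, hf, hf0⟩
  have hinv : (pairing ξ' α)⁻¹ ≤ C * (pairing ξ α)⁻¹ := by
    rw [← div_eq_mul_inv, le_div_iff₀ (hξ α hα hne), inv_mul_le_iff₀ (hξ' α hα hne)]
    linarith [h α hα hne]
  calc (((pairing ξ' α)⁻¹ : ℝ) : EReal) * v f ≤ ((C * (pairing ξ α)⁻¹ : ℝ) : EReal) * v f :=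
        mul_le_mul_of_nonneg_right (EReal.coe_le_coe_iff.2 hinv) (hv α f hα hf hf0)
    _ = C * (((pairing ξ α)⁻¹ : ℝ) * v f) := by rw [EReal.coe_mul, mul_assoc]
    _ ≤ C * Tfun 𝒜 v ξ := mul_le_mul_of_nonneg_left (le_Tfun 𝒜 hα hf hf0) (EReal.coe_nonneg.2 hC)

variable [GradedAlgebra 𝒜] [Algebra.FiniteType k R]

lemma exists_Tfun_le_mul_Tfun (hξ : IsReeb 𝒜 ξ) (hξ' : IsReeb 𝒜 ξ') :
    ∃ C : ℝ, 0 ≤ C ∧ Tfun 𝒜 v ξ' ≤ C * Tfun 𝒜 v ξ := by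
  obtain ⟨E, hE, hweights⟩ := exists_finset_weights 𝒜
  obtain ⟨C, hC, hCE⟩ := hξ.exists_pairing_le_mul 𝒜 hE hξ'
  exact ⟨C, hC, Tfun_le_mul_Tfun 𝒜 hv hξ hξ' hC fun α _ hα =>
    pairing_le_mul_of_mem_closure hCE (hweights α hα)⟩

lemma Tfun_lt_top_of_isReeb (hξ : IsReeb 𝒜 ξ) (hξ' : IsReeb 𝒜 ξ') (hT : Tfun 𝒜 v ξ < ⊤) :
    Tfun 𝒜 v ξ' < ⊤ := by
  obtain ⟨C, hC, hle⟩ := exists_Tfun_le_mul_Tfun 𝒜 hv hξ hξ'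
  refine hle.trans_lt (lt_top_iff_ne_top.2 ((EReal.mul_ne_top _ _).2 ?_))
  exact ⟨Or.inl (EReal.coe_ne_bot C), Or.inl (EReal.coe_nonneg.2 hC),
    Or.inl (EReal.coe_ne_top C), Or.inr hT.ne⟩

lemma eventually_Tfun_le_mul (hξ : IsReeb 𝒜 ξ) {c : ℝ} (hc : 1 < c) :
    ∀ᶠ ξ' in 𝓝[{ξ | IsReeb 𝒜 ξ}] ξ,
      Tfun 𝒜 v ξ' ≤ c * Tfun 𝒜 v ξ ∧ Tfun 𝒜 v ξ ≤ c * Tfun 𝒜 v ξ' := by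
  obtain ⟨E, hE, hweights⟩ := exists_finset_weights 𝒜
  filter_upwards [nhdsWithin_le_nhds (hξ.eventually_pairing_le_mul 𝒜 hE hc),
    self_mem_nhdsWithin] with ξ' hcmp hξ'
  have hc0 : 0 ≤ c := zero_le_one.trans hc.le
  exact ⟨Tfun_le_mul_Tfun 𝒜 hv hξ hξ' hc0 fun α _ hα =>
      pairing_le_mul_of_mem_closure (fun d hd => (hcmp d hd).1) (hweights α hα),
    Tfun_le_mul_Tfun 𝒜 hv hξ' hξ hc0 fun α _ hα =>
      pairing_le_mul_of_mem_closure (fun d hd => (hcmp d hd).2) (hweights α hα)⟩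

lemma continuousOn_Tfun : ContinuousOn (Tfun 𝒜 v) {ξ | IsReeb 𝒜 ξ} := fun _ hξ =>
  EReal.tendsto_of_forall_eventually_le_mul fun _ hc => eventually_Tfun_le_mul 𝒜 hv hξ hc

end LinearBound

section Statements

variable {k : Type*} [Field k] [IsAlgClosed k] [CharZero k]
variable {R : Type*} [CommRing R] [IsDomain R] [IsIntegrallyClosed R] [Algebra k R]
  [Algebra.FiniteType k R]
variable {r : ℕ} (𝒜 : (Fin r → ℤ) → Submodule k R) [GradedAlgebra 𝒜]

/-- The NA link `X₀ = {v ∈ X^an : v(𝔪) = 0}` as a set of semivaluations. -/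
def NALink : Set (R → EReal) :=
  {v | IsSemival k v ∧ (∀ f ∈ mIdeal 𝒜, f ≠ 0 → 0 ≤ v f) ∧
    sInf {x : EReal | ∃ f ∈ mIdeal 𝒜, f ≠ 0 ∧ x = v f} = 0}

theorem statement6
    (v : R → EReal) (hv : v ∈ NALink 𝒜)
    (ξ₀ : Fin r → ℝ) (hξ₀ : IsReeb 𝒜 ξ₀) (hT : Tfun 𝒜 v ξ₀ < ⊤) :
    (∀ ξ : Fin r → ℝ, IsReeb 𝒜 ξ → Tfun 𝒜 v ξ < ⊤) ∧
    ContinuousOn (Tfun 𝒜 v) {ξ : Fin r → ℝ | IsReeb 𝒜 ξ} ∧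
    (∀ (t : ℝ), 0 < t → ∀ ξ : Fin r → ℝ, IsReeb 𝒜 ξ →
      Tfun 𝒜 v (t • ξ) = ((t⁻¹ : ℝ) : EReal) * Tfun 𝒜 v ξ) := by
  have hv₀ : ∀ α f, α ≠ 0 → f ∈ 𝒜 α → f ≠ 0 → 0 ≤ v f := fun α f hα hf hf0 =>
    hv.2.1 f (Ideal.subset_span ⟨α, hα, hf⟩) hf0
  exact ⟨fun ξ hξ => Tfun_lt_top_of_isReeb 𝒜 hv₀ hξ₀ hξ hT, continuousOn_Tfun 𝒜 hv₀,
    fun t ht ξ _ => Tfun_smul 𝒜 v ht ξ⟩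

end Statements
end

section
/- For every real C ≥ 0 and every natural number p there exists a constant C' ≥ 0, depending only on C and p, with the following property: for all reals A, B ≥ 0 with A ≤ B and every finite sequence b₀, b₁, …, b_p of nonnegative reals satisfying b₀ ≤ A and b_{q+1} ≤ b_q + C·√(B·b_q) for all 0 ≤ q < p, one has b_p ≤ C' · A^{1/2^p} · B^{1 − 1/2^p}. -/
theorem statement12 (C : ℝ) (hC : 0 ≤ C) (p : ℕ) :
    ∃ C' : ℝ, 0 ≤ C' ∧
      ∀ A B : ℝ, 0 ≤ A → A ≤ B →
        ∀ b : ℕ → ℝ, (∀ q, 0 ≤ b q) → b 0 ≤ A →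
          (∀ q < p, b (q + 1) ≤ b q + C * Real.sqrt (B * b q)) →
          b p ≤ C' * A ^ ((1 : ℝ) / 2 ^ p) * B ^ (1 - (1 : ℝ) / 2 ^ p) := by
  induction p with
  | zero =>
    refine ⟨1, zero_le_one, ?_⟩
    intro A B hA hAB b hb hb0 hrec
    simpa using hb0
  | succ p ih =>
    obtain ⟨C', hC'0, hC'⟩ := ih
    refine ⟨C' + C * Real.sqrt C', by positivity, ?_⟩
    intro A B hA hAB b hb hb0 hrec
    have hB : 0 ≤ B := hA.trans hAB
    set α : ℝ := 1 / 2 ^ p with hα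
    have hαpos : 0 < α := by positivity
    have hexp : (1:ℝ) / 2 ^ (p+1) = α / 2 := by
      rw [hα, pow_succ]; ring
    have hp := hC' A B hA hAB b hb hb0 (fun q hq => hrec q (Nat.lt_succ_of_lt hq))
    have hstep := hrec p (Nat.lt_succ_self p)
    rcases eq_or_lt_of_le hA with hA0 | hApos
    · -- A = 0 case
      have hAz : A = 0 := hA0.symm
      have hbp : b p = 0 := by
        have h1 : b p ≤ 0 := by
          rw [hAz, Real.zero_rpow hαpos.ne'] at hp; simpa using hp
        exact le_antisymm h1 (hb p)
      have h2 : b (p+1) ≤ 0 := by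
        rw [hbp] at hstep; simpa using hstep
      rw [hAz, Real.zero_rpow (by positivity : ((1:ℝ)/2^(p+1)) ≠ 0)]
      simpa using h2
    · have hBpos : 0 < B := hApos.trans_le hAB
      set x : ℝ := A ^ (α/2) with hxdef
      set y : ℝ := B ^ (α/2) with hydef
      set w : ℝ := B ^ (1 - α/2) with hwdef
      have hxnn : 0 ≤ x := Real.rpow_nonneg hA _
      have hynn : 0 ≤ y := Real.rpow_nonneg hB _
      have hwnn : 0 ≤ w := Real.rpow_nonneg hB _
      have hznn : 0 ≤ B ^ (1-α) := Real.rpow_nonneg hB _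
      have hxy : x ≤ y := Real.rpow_le_rpow hA hAB (by positivity)
      have hA_α : A ^ α = x * x := by
        rw [hxdef, ← Real.rpow_add hApos]; congr 1; ring
      have hw : B ^ (1 - α) * y = w := by
        rw [hydef, hwdef, ← Real.rpow_add hBpos]; congr 1; ring
      have hBB : B * B ^ (1 - α) = w * w := by
        nth_rewrite 1 [← Real.rpow_one B]
        rw [hwdef, ← Real.rpow_add hBpos, ← Real.rpow_add hBpos]; congr 1; ring
      have hkey : B * (C' * A ^ α * B ^ (1-α)) = (Real.sqrt C' * x * w)^2 := by
        rw [hA_α, show B * (C' * (x*x) * B^(1-α)) = C' * (x*x) * (B * B^(1-α)) by ring,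
          hBB, mul_pow, mul_pow, Real.sq_sqrt hC'0]; ring
      have hMle : C' * A ^ α * B ^ (1-α) ≤ C' * x * w := by
        rw [hA_α, ← hw]
        have h3 : x * x ≤ x * y := mul_le_mul_of_nonneg_left hxy hxnn
        calc C' * (x * x) * B ^ (1-α) ≤ C' * (x * y) * B ^ (1-α) := by
              exact mul_le_mul_of_nonneg_right (mul_le_mul_of_nonneg_left h3 hC'0) hznn
          _ = C' * x * (B ^ (1-α) * y) := by ring
      have hsqrt : Real.sqrt (B * b p) ≤ Real.sqrt C' * x * w := by
        have h1 : B * b p ≤ B * (C' * A ^ α * B ^ (1-α)) :=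
          mul_le_mul_of_nonneg_left hp hB
        calc Real.sqrt (B * b p) ≤ Real.sqrt (B * (C' * A^α * B^(1-α))) :=
              Real.sqrt_le_sqrt h1
          _ = Real.sqrt ((Real.sqrt C' * x * w)^2) := by rw [hkey]
          _ = Real.sqrt C' * x * w := Real.sqrt_sq (by positivity)
      have hgoal : b (p+1) ≤ (C' + C * Real.sqrt C') * x * w := by
        calc b (p+1) ≤ b p + C * Real.sqrt (B * b p) := hstep
          _ ≤ (C' * x * w) + C * (Real.sqrt C' * x * w) :=
              add_le_add (hp.trans hMle) (mul_le_mul_of_nonneg_left hsqrt hC)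
          _ = (C' + C * Real.sqrt C') * x * w := by ring
      rw [hexp]
      exact hgoal
end
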